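/- arXiv:2407.08211 — 4 statements merged into one kernel-verified Lean document; each statement's English description precedes it below -/
import Mathlib

section
/- For every prime m ≥ 3, the join graph Γ(Z_{2m}) + Γ(Z_4) does not admit a distance antimagic labeling. -/
open SimpleGraph

/-- The zero-divisor graph of a commutative ring: vertices are the nonzero
zero-divisors, adjacency is `u ≠ v ∧ u * v = 0`. -/
def zeroDivisorGraph (R : Type*) [CommRing R] :
    SimpleGraph {x : R // x ≠ 0 ∧ ∃ y ≠ 0, x * y = 0} where
  Adj u v := u ≠ v ∧ (u : R) * (v : R) = 0
  symm := by
    constructor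
    rintro u v ⟨h1, h2⟩
    exact ⟨h1.symm, by rwa [mul_comm]⟩
  loopless := by constructor; rintro u ⟨h, -⟩; exact h rfl

/-- The join `G + H` of two graphs on disjoint vertex sets: all edges of `G`
and `H`, plus all edges between the two parts. -/
def joinG {α β : Type*} (G : SimpleGraph α) (H : SimpleGraph β) :
    SimpleGraph (α ⊕ β) where
  Adj u v :=
    match u, v with
    | Sum.inl a, Sum.inl b => G.Adj a b
    | Sum.inr a, Sum.inr b => H.Adj a b
    | _, _ => True
  symm := by
    constructor
    rintro (a | a) (b | b) h
    · exact h.symm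
    · trivial
    · trivial
    · exact h.symm
  loopless := by
    constructor
    rintro (a | a) h
    · exact G.irrefl h
    · exact H.irrefl h

/-- `m` disjoint copies of the graph `G`. -/
def copies {V : Type*} (m : ℕ) (G : SimpleGraph V) : SimpleGraph (Fin m × V) where
  Adj u v := u.1 = v.1 ∧ G.Adj u.2 v.2
  symm := by constructor; rintro u v ⟨h1, h2⟩; exact ⟨h1.symm, h2.symm⟩
  loopless := by constructor; rintro u ⟨-, h⟩; exact G.irrefl h

/-- A graph `G` on `n` vertices admits a distance antimagic labeling if there is
a bijective labeling of the vertices by `1, …, n` whose open-neighborhood sums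
(weights) are pairwise distinct. -/
def IsDistanceAntimagic {V : Type*} (G : SimpleGraph V) : Prop :=
  ∃ f : V ≃ Fin (Nat.card V),
    Function.Injective fun u => ∑ᶠ x ∈ G.neighborSet u, ((f x : ℕ) + 1)

theorem stmt4 (m : ℕ) (hm : m.Prime) (h3 : 3 ≤ m) :
    ¬ IsDistanceAntimagic
        (joinG (zeroDivisorGraph (ZMod (2 * m))) (zeroDivisorGraph (ZMod 4))) := by
  rintro ⟨f, hf⟩
  haveI : NeZero (2 * m) := ⟨by omega⟩
  set R := ZMod (2 * m) with hR
  -- basic facts about casts of small naturals in R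
  have hval : ∀ k : ℕ, k < 2 * m → ((k : R)).val = k := fun k hk => ZMod.val_cast_of_lt hk
  have hne : ∀ a b : ℕ, a < 2 * m → b < 2 * m → a ≠ b → (a : R) ≠ (b : R) := by
    intro a b ha hb hab h
    exact hab (by rw [← hval a ha, ← hval b hb, h])
  have hm0 : (m : R) ≠ 0 := by
    have := hne m 0 (by omega) (by omega) (by omega); simpa using this
  -- key: for nonzero a, c*a = 0 ↔ a = m, for c = 2 and c = 4
  have key : ∀ c : ℕ, c = 2 ∨ c = 4 → ∀ a : R, a ≠ 0 → ((c : R) * a = 0 ↔ a = (m : R)) := by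
    intro c hc a ha
    constructor
    · intro h
      have h1 : ((c * a.val : ℕ) : R) = 0 := by
        rw [Nat.cast_mul]
        rwa [ZMod.natCast_zmod_val]
      rw [ZMod.natCast_eq_zero_iff] at h1
      obtain ⟨k, hk⟩ := h1
      have hmdvd : m ∣ a.val := by
        rcases hc with rfl | rfl
        · have hk' : 2 * a.val = 2 * (m * k) := by rw [hk]; ring
          exact ⟨k, by omega⟩
        · have hk' : 4 * a.val = 2 * (m * k) := by rw [hk]; ring
          have : m ∣ 2 * a.val := ⟨k, by omega⟩
          rcases (Nat.Prime.dvd_mul hm).1 this with h' | h'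
          · exact absurd (Nat.le_of_dvd (by omega) h') (by omega)
          · exact h'
      obtain ⟨j, hj⟩ := hmdvd
      have hlt : a.val < 2 * m := ZMod.val_lt a
      have hane : a.val ≠ 0 := fun h0 => ha (by rw [← ZMod.natCast_zmod_val a, h0, Nat.cast_zero])
      have hj1 : j = 1 := by
        rcases Nat.lt_or_ge j 2 with h'' | h''
        · interval_cases j <;> omega
        · have : m * 2 ≤ m * j := Nat.mul_le_mul_left m h''
          omega
      rw [← ZMod.natCast_zmod_val a, hj, hj1, mul_one]
    · rintro rfl
      have : ((c * m : ℕ) : R) = 0 := by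
        rw [ZMod.natCast_eq_zero_iff]
        rcases hc with rfl | rfl
        · exact ⟨1, by ring⟩
        · exact ⟨2, by ring⟩
      rw [Nat.cast_mul] at this
      exact this
  -- the two leaf vertices 2 and 4
  have hzd : ∀ c : ℕ, c = 2 ∨ c = 4 → ((c : R) ≠ 0 ∧ ∃ y ≠ 0, (c : R) * y = 0) := by
    intro c hc
    refine ⟨?_, (m : R), hm0, (key c hc _ hm0).2 rfl⟩
    have := hne c 0 (by omega) (by omega) (by omega); simpa using this
  have h2 := hzd 2 (Or.inl rfl)
  have h4 := hzd 4 (Or.inr rfl)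
  set G := joinG (zeroDivisorGraph R) (zeroDivisorGraph (ZMod 4)) with hG
  set u : (_ : Type) ⊕ _ := Sum.inl (α := {x : R // x ≠ 0 ∧ ∃ y ≠ 0, x * y = 0})
      (⟨((2 : ℕ) : R), h2⟩) with hu
  set v : (_ : Type) ⊕ _ := Sum.inl (α := {x : R // x ≠ 0 ∧ ∃ y ≠ 0, x * y = 0})
      (⟨((4 : ℕ) : R), h4⟩) with hv
  have hns : G.neighborSet u = G.neighborSet v := by
    ext x
    rcases x with a | b
    · simp only [SimpleGraph.mem_neighborSet, hG, hu, hv, joinG, zeroDivisorGraph]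
      constructor
      · rintro ⟨hne', hmul⟩
        have ha : (a : R) = (m : R) := (key 2 (Or.inl rfl) _ a.2.1).1 hmul
        refine ⟨?_, (key 4 (Or.inr rfl) _ a.2.1).2 ha⟩
        intro h
        have : ((4 : ℕ) : R) = (m : R) := by rw [← ha]; exact congrArg Subtype.val h
        exact hne 4 m (by omega) (by omega)
          (by rintro rfl; exact absurd hm (by decide)) this
      · rintro ⟨hne', hmul⟩
        have ha : (a : R) = (m : R) := (key 4 (Or.inr rfl) _ a.2.1).1 hmul
        refine ⟨?_, (key 2 (Or.inl rfl) _ a.2.1).2 ha⟩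
        intro h
        have : ((2 : ℕ) : R) = (m : R) := by rw [← ha]; exact congrArg Subtype.val h
        exact hne 2 m (by omega) (by omega) (by omega) this
    · simp only [SimpleGraph.mem_neighborSet, hG, hu, hv, joinG]
  have huv : u = v := hf (by simp only [hns])
  rw [hu, hv] at huv
  injection huv with h'
  have h24 : ((2 : ℕ) : R) = ((4 : ℕ) : R) := congrArg Subtype.val h'
  have ha : (2 : ℕ) < 2 * m := by omega
  have hb : (4 : ℕ) < 2 * m := by omega
  exact hne 2 4 ha hb (by omega) h24
end

section
/- The Cartesian product graph Γ(Z_6) × Γ(Z_6) ≅ P_3 □ P_3 on 9 vertices admits a distance antimagic labeling. -/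
open SimpleGraph

noncomputable def myEquiv : Fin 3 × Fin 3 ≃ Fin (Nat.card (Fin 3 × Fin 3)) :=
  finProdFinEquiv.trans (finCongr (by simp))

instance pathProdAdjDec : DecidableRel ((SimpleGraph.pathGraph 3 □ SimpleGraph.pathGraph 3).Adj) :=
  fun u v => decidable_of_iff
    ((((u.1 : ℕ) + 1 = v.1 ∨ (v.1 : ℕ) + 1 = u.1) ∧ u.2 = v.2) ∨
      (((u.2 : ℕ) + 1 = v.2 ∨ (v.2 : ℕ) + 1 = u.2) ∧ u.1 = v.1)) (by
    rw [SimpleGraph.boxProd_adj, SimpleGraph.pathGraph_adj, SimpleGraph.pathGraph_adj])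

theorem stmt16 :
    IsDistanceAntimagic ((SimpleGraph.pathGraph 3) □ (SimpleGraph.pathGraph 3)) := by
  refine ⟨myEquiv, ?_⟩
  have key : ∀ u, (∑ᶠ x ∈ ((SimpleGraph.pathGraph 3) □ (SimpleGraph.pathGraph 3)).neighborSet u,
      ((myEquiv x : ℕ) + 1)) =
      ∑ x ∈ ((SimpleGraph.pathGraph 3) □ (SimpleGraph.pathGraph 3)).neighborFinset u,
      ((myEquiv x : ℕ) + 1) := by
    intro u
    rw [SimpleGraph.neighborFinset_def, ← finsum_mem_coe_finset, Set.coe_toFinset]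
  simp only [key]
  decide
end

section
/- For every prime m > 3, the Cartesian product graph Γ(Z_6) × Γ(Z_{2m}) ≅ P_3 □ K_{1,m-1} on 3m vertices admits a distance antimagic labeling. -/
open SimpleGraph

/-- labels 1..3n+3 -/
def labF (n : ℕ) : Fin 3 × (Fin 1 ⊕ Fin n) → ℕ := fun x =>
  Sum.elim
    (fun _ => if x.1.val = 0 then 2*n+1 else if x.1.val = 1 then 2*n+2 else 3*n+3)
    (fun j => if x.1.val = 0 then n+1+j.val else if x.1.val = 1 then j.val+1 else 2*n+3+j.val) x.2

lemma labF_pos (n : ℕ) (x) : 1 ≤ labF n x := by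
  obtain ⟨i, a | j⟩ := x <;> simp [labF] <;> split_ifs <;> omega

lemma labF_le (n : ℕ) (x) : labF n x ≤ 3*n+3 := by
  obtain ⟨i, a | j⟩ := x
  · simp [labF]; split_ifs <;> omega
  · have := j.isLt; simp [labF]; split_ifs <;> omega

lemma labF_inj (n : ℕ) : Function.Injective (labF n) := by
  rintro ⟨i, a | j⟩ ⟨i', b | k⟩ h
  · have hi := i.isLt; have hi' := i'.isLt
    have hab : a = b := Subsingleton.elim a b
    subst hab
    simp only [labF, Sum.elim_inl] at h
    have : i = i' := by split_ifs at h <;> omega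
    rw [this]
  · have hi := i.isLt; have hi' := i'.isLt; have hk := k.isLt
    simp only [labF, Sum.elim_inl, Sum.elim_inr] at h
    exfalso; split_ifs at h <;> omega
  · have hi := i.isLt; have hi' := i'.isLt; have hj := j.isLt
    simp only [labF, Sum.elim_inl, Sum.elim_inr] at h
    exfalso; split_ifs at h <;> omega
  · have hi := i.isLt; have hi' := i'.isLt; have hj := j.isLt; have hk := k.isLt
    simp only [labF, Sum.elim_inr] at h
    have h1 : i = i' ∧ j = k := by
      constructor
      · apply Fin.ext; split_ifs at h <;> omega
      · apply Fin.ext; split_ifs at h <;> omega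
    rw [h1.1, h1.2]

/-- closed-form weights; `S` stands for `∑ k < n, k`, `P` for `n*(n+1)`, `Q` for `n*(2n+3)` -/
def wtF (n S P Q : ℕ) : Fin 3 × (Fin 1 ⊕ Fin n) → ℕ := fun x =>
  Sum.elim
    (fun _ => if x.1.val = 0 then P + S + 2*n+2
              else if x.1.val = 1 then S + 6*n+4
              else Q + S + 2*n+2)
    (fun j => if x.1.val = 0 then 2*n+2+j.val
              else if x.1.val = 1 then 5*n+6+2*j.val
              else 3*n+4+j.val) x.2

lemma wtF_inj (n S P Q : ℕ) (hn : 4 ≤ n) (hS : 3*n ≤ 2*S) (hP : 5*n ≤ P) (hQ : P < Q) :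
    Function.Injective (wtF n S P Q) := by
  rintro ⟨i, a | j⟩ ⟨i', b | k⟩ h
  · have hi := i.isLt; have hi' := i'.isLt
    have hab : a = b := Subsingleton.elim a b
    subst hab
    simp only [wtF, Sum.elim_inl] at h
    have : i = i' := by apply Fin.ext; split_ifs at h <;> omega
    rw [this]
  · have hi := i.isLt; have hi' := i'.isLt; have hk := k.isLt
    simp only [wtF, Sum.elim_inl, Sum.elim_inr] at h
    exfalso; split_ifs at h <;> omega
  · have hi := i.isLt; have hi' := i'.isLt; have hj := j.isLt
    simp only [wtF, Sum.elim_inl, Sum.elim_inr] at h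
    exfalso; split_ifs at h <;> omega
  · have hi := i.isLt; have hi' := i'.isLt; have hj := j.isLt; have hk := k.isLt
    simp only [wtF, Sum.elim_inr] at h
    have h1 : i = i' ∧ j = k := by
      constructor
      · apply Fin.ext; split_ifs at h <;> omega
      · apply Fin.ext; split_ifs at h <;> omega
    rw [h1.1, h1.2]

theorem stmt17 (m : ℕ) (hm : m.Prime) (h3 : 3 < m) :
    IsDistanceAntimagic
      ((SimpleGraph.pathGraph 3) □ (completeBipartiteGraph (Fin 1) (Fin (m - 1)))) := by
  classical
  set n := m - 1 with hndef
  have hn4 : 4 ≤ n := by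
    have h4 : m ≠ 4 := by rintro rfl; norm_num at hm
    omega
  set G := (SimpleGraph.pathGraph 3) □ (completeBipartiteGraph (Fin 1) (Fin n)) with hG
  have hcard : Nat.card (Fin 3 × (Fin 1 ⊕ Fin n)) = 3*n+3 := by
    simp [Nat.card_eq_fintype_card]; ring
  set f0 : Fin 3 × (Fin 1 ⊕ Fin n) → Fin (Nat.card (Fin 3 × (Fin 1 ⊕ Fin n))) :=
    fun x => ⟨labF n x - 1, by rw [hcard]; have := labF_le n x; have := labF_pos n x; omega⟩
    with hf0
  have hf0inj : Function.Injective f0 := by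
    intro x y h
    apply labF_inj n
    have h2 := congrArg Fin.val h
    simp only [hf0] at h2
    have := labF_pos n x; have := labF_pos n y
    omega
  have hbij : Function.Bijective f0 :=
    (Fintype.bijective_iff_injective_and_card f0).mpr ⟨hf0inj, by simp [hcard]⟩
  refine ⟨Equiv.ofBijective f0 hbij, ?_⟩
  set S : ℕ := ∑ k ∈ Finset.range n, k with hSdef
  have hS2 : 2*S = n*(n-1) := by
    rw [hSdef, mul_comm]; exact Finset.sum_range_id_mul_two n
  have hfx : ∀ x, ((Equiv.ofBijective f0 hbij x : ℕ) + 1) = labF n x := by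
    intro x
    have := labF_pos n x
    simp only [Equiv.ofBijective_apply, hf0]
    omega
  have hwt : ∀ u, (∑ᶠ x ∈ G.neighborSet u, ((Equiv.ofBijective f0 hbij x : ℕ) + 1))
      = wtF n S (n*(n+1)) (n*(2*n+3)) u := by
    intro u
    rw [show (G.neighborSet u) = ↑(G.neighborFinset u) from (Set.coe_toFinset _).symm,
      finsum_mem_coe_finset]
    simp only [hfx]
    have hnb : G.neighborFinset u = Finset.univ.filter (fun x => G.Adj u x) := by
      ext x; simp [mem_neighborFinset]
    rw [hnb, Finset.sum_filter, Fintype.sum_prod_type]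
    obtain ⟨i, a | j⟩ := u
    · obtain rfl : a = 0 := Subsingleton.elim a 0
      fin_cases i <;>
        simp [hG, Fin.sum_univ_three, Fintype.sum_sum_type, boxProd_adj, pathGraph_adj,
          completeBipartiteGraph_adj, labF, wtF, Finset.sum_ite_eq, Finset.sum_ite_eq',
          Finset.sum_add_distrib, Finset.mul_sum, hSdef] <;>
        simp only [Fin.sum_univ_eq_sum_range (fun k => k) n] <;> ring
    · fin_cases i <;>
        simp [hG, Fin.sum_univ_three, Fintype.sum_sum_type, boxProd_adj, pathGraph_adj,
          completeBipartiteGraph_adj, labF, wtF, Finset.sum_ite_eq, Finset.sum_ite_eq',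
          Finset.sum_add_distrib, Finset.mul_sum, hSdef] <;> ring
  have hinj := wtF_inj n S (n*(n+1)) (n*(2*n+3)) hn4
    (by rw [hS2, show 3*n = n*3 by ring]; exact Nat.mul_le_mul_left n (by omega))
    (by rw [show 5*n = n*5 by ring]; exact Nat.mul_le_mul_left n (by omega))
    (by apply Nat.mul_lt_mul_of_le_of_lt (le_refl n) (by omega) (by omega))
  intro u v huv
  apply hinj
  rw [← hwt u, ← hwt v]
  exact huv
end

section
/- For every prime m ≥ 3, the Cartesian product graph Γ(Z_6) × Γ(Z_{m²}) ≅ P_3 □ K_{m-1} on 3(m−1) vertices admits a distance antimagic labeling. -/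
open SimpleGraph

namespace S19

open Finset

/-- The distance antimagic labeling of `P₃ □ K_n` (n even): row 0 gets
`3j+1+(j%2)`, row 1 gets `3(n-j)`, row 2 gets `3j+2-(j%2)`. -/
def lab (n : ℕ) (x : Fin 3 × Fin n) : ℕ :=
  if x.1.val = 0 then (if x.2.val % 2 = 0 then 3 * x.2.val + 1 else 3 * x.2.val + 2)
  else if x.1.val = 1 then 3 * (n - x.2.val)
  else (if x.2.val % 2 = 0 then 3 * x.2.val + 2 else 3 * x.2.val + 1)

lemma lab0 (n : ℕ) (j : Fin n) : lab n (0, j) = 3 * j.val + 1 + j.val % 2 := by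
  simp only [lab]; norm_num; split_ifs <;> omega

lemma lab1 (n : ℕ) (j : Fin n) : lab n (1, j) = 3 * (n - j.val) := by
  simp only [lab]; norm_num

lemma lab2 (n : ℕ) (j : Fin n) : lab n (2, j) = 3 * j.val + 2 - j.val % 2 := by
  simp only [lab]; norm_num; split_ifs <;> omega

lemma lab_pos (n : ℕ) (x : Fin 3 × Fin n) : 1 ≤ lab n x := by
  obtain ⟨i, j⟩ := x
  have := j.isLt
  simp only [lab]; split_ifs <;> omega

lemma lab_le (n : ℕ) (x : Fin 3 × Fin n) : lab n x ≤ 3 * n := by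
  obtain ⟨i, j⟩ := x
  have := j.isLt
  simp only [lab]; split_ifs <;> omega

lemma lab_inj (n : ℕ) : Function.Injective (lab n) := by
  rintro ⟨i, j⟩ ⟨i', j'⟩ hl
  have hj := j.isLt; have hj' := j'.isLt
  have hi := i.isLt; have hi' := i'.isLt
  simp only [lab] at hl
  have key : i.val = i'.val ∧ j.val = j'.val := by split_ifs at hl <;> omega
  exact Prod.ext (Fin.ext key.1) (Fin.ext key.2)

lemma sumA (h : ℕ) : ∑ j ∈ Finset.range (2 * h), (3 * j + 1 + j % 2) = 6 * h * h := by
  induction h with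
  | zero => simp
  | succ k ih =>
    rw [show 2 * (k + 1) = (2 * k) + 1 + 1 by ring, Finset.sum_range_succ,
      Finset.sum_range_succ, ih]
    have h1 : (2 * k) % 2 = 0 := by omega
    have h2 : (2 * k + 1) % 2 = 1 := by omega
    rw [h1, h2]; ring

lemma sumC (h : ℕ) : ∑ j ∈ Finset.range (2 * h), (3 * j + 2 - j % 2) = 6 * h * h := by
  induction h with
  | zero => simp
  | succ k ih =>
    rw [show 2 * (k + 1) = (2 * k) + 1 + 1 by ring, Finset.sum_range_succ,
      Finset.sum_range_succ, ih]
    have h1 : 3 * (2 * k) + 2 - (2 * k) % 2 = 6 * k + 2 := by omega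
    have h2 : 3 * (2 * k + 1) + 2 - (2 * k + 1) % 2 = 6 * k + 4 := by omega
    rw [h1, h2]; ring

lemma sumB (h : ℕ) : ∑ j ∈ Finset.range (2 * h), 3 * (2 * h - j) = 6 * h * h + 3 * h := by
  induction h with
  | zero => simp
  | succ k ih =>
    rw [show 2 * (k + 1) = (2 * k) + 1 + 1 by ring, Finset.sum_range_succ,
      Finset.sum_range_succ]
    have e : ∑ j ∈ Finset.range (2 * k), 3 * (2 * k + 1 + 1 - j)
        = ∑ j ∈ Finset.range (2 * k), (3 * (2 * k - j) + 6) := by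
      refine Finset.sum_congr rfl fun j hj => ?_
      have := Finset.mem_range.mp hj; omega
    rw [e, Finset.sum_add_distrib, ih, Finset.sum_const, Finset.card_range]
    have h1 : 3 * (2 * k + 1 + 1 - 2 * k) = 6 := by omega
    have h2 : 3 * (2 * k + 1 + 1 - (2 * k + 1)) = 3 := by omega
    rw [h1, h2, smul_eq_mul]; ring

lemma finsumA (n h : ℕ) (hn : n = 2 * h) : ∑ j : Fin n, lab n (0, j) = 6 * h * h := by
  simp only [lab0]
  rw [Fin.sum_univ_eq_sum_range (fun t => 3 * t + 1 + t % 2) n, hn, sumA]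

lemma finsumB (n h : ℕ) (hn : n = 2 * h) :
    ∑ j : Fin n, lab n (1, j) = 6 * h * h + 3 * h := by
  simp only [lab1]
  rw [Fin.sum_univ_eq_sum_range (fun t => 3 * (n - t)) n, hn, sumB]

lemma finsumC (n h : ℕ) (hn : n = 2 * h) : ∑ j : Fin n, lab n (2, j) = 6 * h * h := by
  simp only [lab2]
  rw [Fin.sum_univ_eq_sum_range (fun t => 3 * t + 2 - t % 2) n, hn, sumC]

lemma sum_ne_add {n : ℕ} (g : Fin n → ℕ) (b : Fin n) :
    (∑ j : Fin n, if b = j then 0 else g j) + g b = ∑ j : Fin n, g j := by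
  classical
  have : ∑ j : Fin n, g j
      = ∑ j : Fin n, ((if b = j then 0 else g j) + (if b = j then g j else 0)) := by
    refine Finset.sum_congr rfl fun j _ => ?_
    split <;> simp
  rw [this, Finset.sum_add_distrib, Finset.sum_ite_eq]
  simp

lemma sum_ne_add' (n : ℕ) (i : Fin 3) (b : Fin n) :
    (∑ j : Fin n, if b = j then 0 else lab n (i, j)) + lab n (i, b)
      = ∑ j : Fin n, lab n (i, j) :=
  sum_ne_add (fun j => lab n (i, j)) b

open scoped Classical in
lemma weight_filter {n : ℕ} (G : SimpleGraph (Fin 3 × Fin n)) (g : Fin 3 × Fin n → ℕ)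
    (u : Fin 3 × Fin n) :
    (∑ᶠ x ∈ G.neighborSet u, g x)
      = ∑ x : Fin 3 × Fin n, if G.Adj u x then g x else 0 := by
  rw [show G.neighborSet u = ↑(Finset.univ.filter (fun x => G.Adj u x)) by
    ext x; simp [SimpleGraph.neighborSet]]
  rw [finsum_mem_coe_finset, Finset.sum_filter]

lemma adjG (n : ℕ) (a c : Fin 3) (b j : Fin n) :
    ((SimpleGraph.pathGraph 3) □ (⊤ : SimpleGraph (Fin n))).Adj (a, b) (c, j)
      ↔ ((a.val + 1 = c.val ∨ c.val + 1 = a.val) ∧ b = j) ∨ (b ≠ j ∧ a = c) := by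
  simp [SimpleGraph.boxProd_adj, SimpleGraph.pathGraph_adj]

open scoped Classical in
lemma W0 (n : ℕ) (b : Fin n) :
    (∑ᶠ x ∈ ((SimpleGraph.pathGraph 3) □ (⊤ : SimpleGraph (Fin n))).neighborSet
        ((0 : Fin 3), b), lab n x) + lab n (0, b)
    = (∑ j : Fin n, lab n (0, j)) + lab n (1, b) := by
  rw [weight_filter, Fintype.sum_prod_type, Fin.sum_univ_three]
  have e0 : (∑ j : Fin n,
      if ((SimpleGraph.pathGraph 3) □ (⊤ : SimpleGraph (Fin n))).Adj ((0 : Fin 3), b) ((0 : Fin 3), j)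
        then lab n ((0 : Fin 3), j) else 0)
      = ∑ j : Fin n, if b = j then 0 else lab n (0, j) := by
    refine Finset.sum_congr rfl fun j _ => ?_
    rw [adjG]
    rcases eq_or_ne b j with h | h <;> simp [h]
  have e1 : (∑ j : Fin n,
      if ((SimpleGraph.pathGraph 3) □ (⊤ : SimpleGraph (Fin n))).Adj ((0 : Fin 3), b) ((1 : Fin 3), j)
        then lab n ((1 : Fin 3), j) else 0)
      = lab n (1, b) := by
    have e : (∑ j : Fin n,
        if ((SimpleGraph.pathGraph 3) □ (⊤ : SimpleGraph (Fin n))).Adj ((0 : Fin 3), b) ((1 : Fin 3), j)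
          then lab n ((1 : Fin 3), j) else 0)
        = ∑ j : Fin n, if b = j then lab n (1, j) else 0 := by
      refine Finset.sum_congr rfl fun j _ => ?_
      rw [adjG]
      rcases eq_or_ne b j with h | h <;> simp [h]
    rw [e, Finset.sum_ite_eq]; simp
  have e2 : (∑ j : Fin n,
      if ((SimpleGraph.pathGraph 3) □ (⊤ : SimpleGraph (Fin n))).Adj ((0 : Fin 3), b) ((2 : Fin 3), j)
        then lab n ((2 : Fin 3), j) else 0)
      = 0 := by
    refine Finset.sum_eq_zero fun j _ => ?_
    rw [if_neg]
    rw [adjG]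
    rcases eq_or_ne b j with h | h <;> simp [h]
  rw [e0, e1, e2]
  have := sum_ne_add' n 0 b
  omega

open scoped Classical in
lemma W1 (n : ℕ) (b : Fin n) :
    (∑ᶠ x ∈ ((SimpleGraph.pathGraph 3) □ (⊤ : SimpleGraph (Fin n))).neighborSet
        ((1 : Fin 3), b), lab n x) + lab n (1, b)
    = (∑ j : Fin n, lab n (1, j)) + lab n (0, b) + lab n (2, b) := by
  rw [weight_filter, Fintype.sum_prod_type, Fin.sum_univ_three]
  have e0 : (∑ j : Fin n,
      if ((SimpleGraph.pathGraph 3) □ (⊤ : SimpleGraph (Fin n))).Adj ((1 : Fin 3), b) ((0 : Fin 3), j)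
        then lab n ((0 : Fin 3), j) else 0)
      = lab n (0, b) := by
    have e : (∑ j : Fin n,
        if ((SimpleGraph.pathGraph 3) □ (⊤ : SimpleGraph (Fin n))).Adj ((1 : Fin 3), b) ((0 : Fin 3), j)
          then lab n ((0 : Fin 3), j) else 0)
        = ∑ j : Fin n, if b = j then lab n (0, j) else 0 := by
      refine Finset.sum_congr rfl fun j _ => ?_
      rw [adjG]
      rcases eq_or_ne b j with h | h <;> simp [h]
    rw [e, Finset.sum_ite_eq]; simp
  have e1 : (∑ j : Fin n,
      if ((SimpleGraph.pathGraph 3) □ (⊤ : SimpleGraph (Fin n))).Adj ((1 : Fin 3), b) ((1 : Fin 3), j)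
        then lab n ((1 : Fin 3), j) else 0)
      = ∑ j : Fin n, if b = j then 0 else lab n (1, j) := by
    refine Finset.sum_congr rfl fun j _ => ?_
    rw [adjG]
    rcases eq_or_ne b j with h | h <;> simp [h]
  have e2 : (∑ j : Fin n,
      if ((SimpleGraph.pathGraph 3) □ (⊤ : SimpleGraph (Fin n))).Adj ((1 : Fin 3), b) ((2 : Fin 3), j)
        then lab n ((2 : Fin 3), j) else 0)
      = lab n (2, b) := by
    have e : (∑ j : Fin n,
        if ((SimpleGraph.pathGraph 3) □ (⊤ : SimpleGraph (Fin n))).Adj ((1 : Fin 3), b) ((2 : Fin 3), j)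
          then lab n ((2 : Fin 3), j) else 0)
        = ∑ j : Fin n, if b = j then lab n (2, j) else 0 := by
      refine Finset.sum_congr rfl fun j _ => ?_
      rw [adjG]
      rcases eq_or_ne b j with h | h <;> simp [h]
    rw [e, Finset.sum_ite_eq]; simp
  rw [e0, e1, e2]
  have := sum_ne_add' n 1 b
  omega

open scoped Classical in
lemma W2 (n : ℕ) (b : Fin n) :
    (∑ᶠ x ∈ ((SimpleGraph.pathGraph 3) □ (⊤ : SimpleGraph (Fin n))).neighborSet
        ((2 : Fin 3), b), lab n x) + lab n (2, b)
    = (∑ j : Fin n, lab n (2, j)) + lab n (1, b) := by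
  rw [weight_filter, Fintype.sum_prod_type, Fin.sum_univ_three]
  have e0 : (∑ j : Fin n,
      if ((SimpleGraph.pathGraph 3) □ (⊤ : SimpleGraph (Fin n))).Adj ((2 : Fin 3), b) ((0 : Fin 3), j)
        then lab n ((0 : Fin 3), j) else 0)
      = 0 := by
    refine Finset.sum_eq_zero fun j _ => ?_
    rw [if_neg]
    rw [adjG]
    rcases eq_or_ne b j with h | h <;> simp [h]
  have e1 : (∑ j : Fin n,
      if ((SimpleGraph.pathGraph 3) □ (⊤ : SimpleGraph (Fin n))).Adj ((2 : Fin 3), b) ((1 : Fin 3), j)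
        then lab n ((1 : Fin 3), j) else 0)
      = lab n (1, b) := by
    have e : (∑ j : Fin n,
        if ((SimpleGraph.pathGraph 3) □ (⊤ : SimpleGraph (Fin n))).Adj ((2 : Fin 3), b) ((1 : Fin 3), j)
          then lab n ((1 : Fin 3), j) else 0)
        = ∑ j : Fin n, if b = j then lab n (1, j) else 0 := by
      refine Finset.sum_congr rfl fun j _ => ?_
      rw [adjG]
      rcases eq_or_ne b j with h | h <;> simp [h]
    rw [e, Finset.sum_ite_eq]; simp
  have e2 : (∑ j : Fin n,
      if ((SimpleGraph.pathGraph 3) □ (⊤ : SimpleGraph (Fin n))).Adj ((2 : Fin 3), b) ((2 : Fin 3), j)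
        then lab n ((2 : Fin 3), j) else 0)
      = ∑ j : Fin n, if b = j then 0 else lab n (2, j) := by
    refine Finset.sum_congr rfl fun j _ => ?_
    rw [adjG]
    rcases eq_or_ne b j with h | h <;> simp [h]
  rw [e0, e1, e2]
  have := sum_ne_add' n 2 b
  omega

lemma main (n h : ℕ) (hh : 1 ≤ h) (hn : n = 2 * h) :
    IsDistanceAntimagic ((SimpleGraph.pathGraph 3) □ (⊤ : SimpleGraph (Fin n))) := by
  classical
  have hcard : Nat.card (Fin 3 × Fin n) = 3 * n := by simp
  have hF : ∀ x : Fin 3 × Fin n, lab n x - 1 < 3 * n := fun x => by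
    have h1 := lab_pos n x; have h2 := lab_le n x
    omega
  set F : Fin 3 × Fin n → Fin (3 * n) := fun x => ⟨lab n x - 1, hF x⟩ with hFdef
  have hFinj : Function.Injective F := by
    intro x y hxy
    apply lab_inj n
    have h1 := lab_pos n x; have h2 := lab_pos n y
    have hv : lab n x - 1 = lab n y - 1 := congrArg Fin.val hxy
    omega
  have hFbij : Function.Bijective F := by
    rw [Fintype.bijective_iff_injective_and_card]
    exact ⟨hFinj, by simp⟩
  refine ⟨(Equiv.ofBijective F hFbij).trans (finCongr hcard.symm), ?_⟩
  have key : ∀ u : Fin 3 × Fin n,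
      (∑ᶠ x ∈ ((SimpleGraph.pathGraph 3) □ (⊤ : SimpleGraph (Fin n))).neighborSet u,
        ((((Equiv.ofBijective F hFbij).trans (finCongr hcard.symm)) x : ℕ) + 1))
      = ∑ᶠ x ∈ ((SimpleGraph.pathGraph 3) □ (⊤ : SimpleGraph (Fin n))).neighborSet u,
          lab n x := by
    intro u
    refine finsum_mem_congr rfl fun x _ => ?_
    have h1 := lab_pos n x
    simp only [Equiv.trans_apply, Equiv.ofBijective_apply, finCongr_apply, Fin.coe_cast, hFdef]
    omega
  suffices H : Function.Injective
      (fun u : Fin 3 × Fin n =>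
        ∑ᶠ x ∈ ((SimpleGraph.pathGraph 3) □ (⊤ : SimpleGraph (Fin n))).neighborSet u,
          lab n x) by
    intro u v huv
    exact H ((key u).symm.trans (huv.trans (key v)))
  rintro ⟨a, b⟩ ⟨c, d⟩ hw
  dsimp only at hw
  have hb := b.isLt
  have hd := d.isLt
  have rel1 : (∑ j : Fin n, lab n (1, j)) = (∑ j : Fin n, lab n (0, j)) + 3 * h := by
    rw [finsumA n h hn, finsumB n h hn]
  have rel2 : (∑ j : Fin n, lab n (2, j)) = (∑ j : Fin n, lab n (0, j)) := by
    rw [finsumA n h hn, finsumC n h hn]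
  have l0b := lab0 n b; have l1b := lab1 n b; have l2b := lab2 n b
  have l0d := lab0 n d; have l1d := lab1 n d; have l2d := lab2 n d
  have hfin3 : ∀ x : Fin 3, x = 0 ∨ x = 1 ∨ x = 2 := by decide
  rcases hfin3 a with rfl | rfl | rfl <;> rcases hfin3 c with rfl | rfl | rfl
  · have E1 := W0 n b; have E2 := W0 n d
    simp only [Prod.mk.injEq]
    exact ⟨trivial, Fin.ext (by omega)⟩
  · exfalso
    have E1 := W0 n b; have E2 := W1 n d
    omega
  · exfalso
    have E1 := W0 n b; have E2 := W2 n d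
    omega
  · exfalso
    have E1 := W1 n b; have E2 := W0 n d
    omega
  · have E1 := W1 n b; have E2 := W1 n d
    simp only [Prod.mk.injEq]
    exact ⟨trivial, Fin.ext (by omega)⟩
  · exfalso
    have E1 := W1 n b; have E2 := W2 n d
    omega
  · exfalso
    have E1 := W2 n b; have E2 := W0 n d
    omega
  · exfalso
    have E1 := W2 n b; have E2 := W1 n d
    omega
  · have E1 := W2 n b; have E2 := W2 n d
    simp only [Prod.mk.injEq]
    exact ⟨trivial, Fin.ext (by omega)⟩

end S19

theorem stmt19 (m : ℕ) (hm : m.Prime) (h3 : 3 ≤ m) :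
    IsDistanceAntimagic
      ((SimpleGraph.pathGraph 3) □ (⊤ : SimpleGraph (Fin (m - 1)))) := by
  have hodd : Odd m := hm.odd_of_ne_two (by omega)
  obtain ⟨k, hk⟩ := hodd
  exact S19.main (m - 1) k (by omega) (by omega)
end
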